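/- Fix p ≥ 1 and block sizes n : Fin p → ℕ with n k ≥ 1, let ι := Σ k, Fin (n k), let G := ∏_k U(n k) with its Haar probability measure μ, and let ρ ∈ M_ι(ℂ). Then ∫_G (blockDiagonal' V) · ρ · (blockDiagonal' V)† dμ(V) = blockDiagonal'( fun k => (trace(ρ_k)/(n k)) • 1_{n k} ), where ρ_k is the k-th diagonal block of ρ. -/

import Mathlib

open MeasureTheory Matrix

attribute [local instance] Matrix.normedAddCommGroup Matrix.normedSpace

noncomputable instance (m : ℕ) : MeasurableSpace (Matrix.unitaryGroup (Fin m) ℂ) := borel _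
instance (m : ℕ) : BorelSpace (Matrix.unitaryGroup (Fin m) ℂ) := ⟨rfl⟩

/-- The `k`-th diagonal block of a matrix indexed by the sigma type `Σ k, Fin (n k)`. -/
def diagBlock {p : ℕ} {n : Fin p → ℕ} (ρ : Matrix (Σ k, Fin (n k)) (Σ k, Fin (n k)) ℂ)
    (k : Fin p) : Matrix (Fin (n k)) (Fin (n k)) ℂ :=
  Matrix.of fun i j => ρ ⟨k, i⟩ ⟨k, j⟩

/-!
By left invariance of the Haar measure, the twirl `T = ∫ B(V) ρ B(V)† dμ`, where
`B = blockDiagonal'`, satisfies `B(U) T B(U)† = T` for every block-diagonal unitary `B(U)`.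
Conjugating by a diagonal unitary with one entry `-1` shows that `T` vanishes off the diagonal,
and conjugating by the permutation matrix of a transposition inside a block shows that the
diagonal entries of a block agree; so `T` is a scalar on each block. That scalar is read off
from the block trace, which every `V_k ρ_k V_k†`, hence also their average, shares with `ρ_k`.
-/

namespace Matrix

/- Instances that search does not find through the type synonym `Matrix m n 𝕜` (whose sup norm
is only a local instance) or through the submonoid coercion of `unitaryGroup m 𝕜`. -/
instance {m n 𝕜 : Type*} [Fintype m] [Fintype n] [RCLike 𝕜] : ContinuousENorm (Matrix m n 𝕜) :=
  SeminormedAddGroup.toContinuousENorm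

instance {m n R : Type*} [Finite m] [Finite n] [TopologicalSpace R] [SecondCountableTopology R] :
    SecondCountableTopology (Matrix m n R) :=
  inferInstanceAs (SecondCountableTopology (m → n → R))

section Unitary

variable {m 𝕜 : Type*} [Fintype m] [DecidableEq m] [RCLike 𝕜]

instance : SecondCountableTopology (unitaryGroup m 𝕜) :=
  TopologicalSpace.Subtype.secondCountableTopology _

theorem isCompact_unitaryGroup : IsCompact (unitaryGroup m 𝕜 : Set (Matrix m m 𝕜)) := by
  refine (isCompact_univ_pi fun _ => isCompact_univ_pi fun _ =>
    ProperSpace.isCompact_closedBall (0 : 𝕜) 1).of_isClosed_subset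
      (isClosed_unitary (R := Matrix m m 𝕜)) fun U hU i _ j _ => ?_
  simpa using entry_norm_bound_of_unitary hU i j

instance : CompactSpace (unitaryGroup m 𝕜) :=
  isCompact_iff_compactSpace.mp isCompact_unitaryGroup

end Unitary

section Commutant

variable {m α 𝕜 : Type*} [Fintype m] [DecidableEq m]

theorem diagonal_mul_mul_star_diagonal_apply [Semiring α] [StarRing α] (d : m → α)
    (Y : Matrix m m α) (i j : m) :
    (diagonal d * Y * star (diagonal d)) i j = d i * Y i j * star (d j) := by
  rw [star_eq_conjTranspose, diagonal_conjTranspose, mul_diagonal, diagonal_mul, Pi.star_apply]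

theorem permMatrix_mul_mul_star_permMatrix [Semiring α] [StarRing α] (σ : Equiv.Perm m)
    (Y : Matrix m m α) :
    σ.permMatrix α * Y * star (σ.permMatrix α) = Y.submatrix σ σ := by
  rw [star_eq_conjTranspose, conjTranspose_permMatrix, PEquiv.toMatrix_toPEquiv_mul,
    PEquiv.mul_toMatrix_toPEquiv, submatrix_submatrix]
  rfl

section CommRing

variable [CommRing α] [StarRing α]

theorem permMatrix_mem_unitaryGroup (σ : Equiv.Perm m) : σ.permMatrix α ∈ unitaryGroup m α := by
  rw [mem_unitaryGroup_iff, star_eq_conjTranspose, conjTranspose_permMatrix, ← permMatrix_mul,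
    inv_mul_cancel, permMatrix_one]

theorem diagonal_mem_unitaryGroup {d : m → α} (hd : ∀ i, d i * star (d i) = 1) :
    diagonal d ∈ unitaryGroup m α := by
  rw [mem_unitaryGroup_iff, star_eq_conjTranspose, diagonal_conjTranspose, diagonal_mul_diagonal,
    ← diagonal_one]
  exact congrArg diagonal (funext hd)

theorem apply_self_eq_of_forall_unitary_conj_eq {Y : Matrix m m α}
    (hY : ∀ U ∈ unitaryGroup m α, U * Y * star U = Y) (i j : m) : Y i i = Y j j := by
  have h := congrFun₂ (hY _ (permMatrix_mem_unitaryGroup (Equiv.swap i j))) i i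
  rw [permMatrix_mul_mul_star_permMatrix, submatrix_apply, Equiv.swap_apply_left] at h
  exact h.symm

end CommRing

variable [Field 𝕜] [StarRing 𝕜] [CharZero 𝕜]

theorem apply_eq_zero_of_forall_unitary_conj_eq {Y : Matrix m m 𝕜}
    (hY : ∀ U ∈ unitaryGroup m 𝕜, U * Y * star U = Y) {i j : m} (hij : i ≠ j) : Y i j = 0 := by
  let d : m → 𝕜 := fun x => if x = j then -1 else 1
  have hd : ∀ x, d x * star (d x) = 1 := fun x => by by_cases hx : x = j <;> simp [d, hx]
  have h := congrFun₂ (hY _ (diagonal_mem_unitaryGroup hd)) i j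
  rw [diagonal_mul_mul_star_diagonal_apply] at h
  simp only [d, if_neg hij, if_pos rfl, star_neg, star_one] at h
  linear_combination -h / 2

theorem eq_smul_one_of_forall_unitary_conj_eq {Y : Matrix m m 𝕜}
    (hY : ∀ U ∈ unitaryGroup m 𝕜, U * Y * star U = Y) :
    Y = (Y.trace / Fintype.card m) • (1 : Matrix m m 𝕜) := by
  ext i j
  rcases eq_or_ne i j with rfl | hij
  · have : Nonempty m := ⟨i⟩
    have hcard : (Fintype.card m : 𝕜) ≠ 0 := Nat.cast_ne_zero.mpr Fintype.card_ne_zero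
    have htrace : Y.trace = Fintype.card m * Y i i := by
      simp [trace, apply_self_eq_of_forall_unitary_conj_eq hY _ i]
    simp [htrace, hcard]
  · simp [apply_eq_zero_of_forall_unitary_conj_eq hY hij, hij]

end Commutant

section Block

variable {κ α 𝕜 : Type*} [Fintype κ] [DecidableEq κ] {ι : κ → Type*} [∀ k, Fintype (ι k)]

theorem submatrix_blockDiagonal'_mul_mul_blockDiagonal' [Semiring α]
    (A B : ∀ k, Matrix (ι k) (ι k) α) (X : Matrix (Σ k, ι k) (Σ k, ι k) α) (k l : κ) :
    (blockDiagonal' A * X * blockDiagonal' B).submatrix (Sigma.mk k) (Sigma.mk l) =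
      A k * X.submatrix (Sigma.mk k) (Sigma.mk l) * B l := by
  ext i j
  simp [mul_apply, Fintype.sum_sigma, blockDiagonal'_apply', Finset.sum_mul]

theorem submatrix_blockDiagonal'_mul_mul_star_blockDiagonal' [Semiring α] [StarRing α]
    (U : ∀ k, Matrix (ι k) (ι k) α) (X : Matrix (Σ k, ι k) (Σ k, ι k) α) (k l : κ) :
    (blockDiagonal' U * X * star (blockDiagonal' U)).submatrix (Sigma.mk k) (Sigma.mk l) =
      U k * X.submatrix (Sigma.mk k) (Sigma.mk l) * star (U l) := by
  rw [star_eq_conjTranspose, blockDiagonal'_conjTranspose,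
    submatrix_blockDiagonal'_mul_mul_blockDiagonal', star_eq_conjTranspose]

variable [∀ k, DecidableEq (ι k)]

theorem trace_blockDiag'_unitary_conj [CommRing α] [StarRing α] (U : ∀ k, unitaryGroup (ι k) α)
    (X : Matrix (Σ k, ι k) (Σ k, ι k) α) (k : κ) :
    (blockDiag' (blockDiagonal' (fun k => (U k : Matrix (ι k) (ι k) α)) * X *
      star (blockDiagonal' fun k => (U k : Matrix (ι k) (ι k) α))) k).trace =
      (blockDiag' X k).trace := by
  change (submatrix _ (Sigma.mk k) (Sigma.mk k)).trace =
    (X.submatrix (Sigma.mk k) (Sigma.mk k)).trace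
  rw [submatrix_blockDiagonal'_mul_mul_star_blockDiagonal', trace_mul_cycle,
    UnitaryGroup.star_mul_self, one_mul]

theorem eq_blockDiagonal'_of_forall_unitary_conj_eq [Field 𝕜] [StarRing 𝕜] [CharZero 𝕜]
    {X : Matrix (Σ k, ι k) (Σ k, ι k) 𝕜}
    (hX : ∀ U : ∀ k, unitaryGroup (ι k) 𝕜,
      blockDiagonal' (fun k => (U k : Matrix (ι k) (ι k) 𝕜)) * X *
        star (blockDiagonal' fun k => (U k : Matrix (ι k) (ι k) 𝕜)) = X) :
    X = blockDiagonal' fun k => ((blockDiag' X k).trace / Fintype.card (ι k)) • 1 := by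
  have hblock (U : ∀ k, unitaryGroup (ι k) 𝕜) (k l : κ) :
      (U k : Matrix (ι k) (ι k) 𝕜) * X.submatrix (Sigma.mk k) (Sigma.mk l) *
        star (U l : Matrix (ι l) (ι l) 𝕜) = X.submatrix (Sigma.mk k) (Sigma.mk l) := by
    rw [← submatrix_blockDiagonal'_mul_mul_star_blockDiagonal'
      fun k => (U k : Matrix (ι k) (ι k) 𝕜), hX]
  ext ⟨k, i⟩ ⟨l, j⟩
  rcases eq_or_ne k l with rfl | hkl
  · rw [blockDiagonal'_apply_eq]
    refine congrFun₂ (eq_smul_one_of_forall_unitary_conj_eq (Y := blockDiag' X k)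
      fun W hW => ?_) i j
    have h := hblock (Pi.mulSingle k ⟨W, hW⟩) k k
    rw [Pi.mulSingle_eq_same] at h
    exact h
  · rw [blockDiagonal'_apply_ne _ _ _ hkl]
    have h := congrFun₂ (hblock (Pi.mulSingle l (-1)) k l) i j
    simp only [Pi.mulSingle_eq_of_ne hkl, OneMemClass.coe_one, Matrix.one_mul,
      Pi.mulSingle_eq_same, Unitary.coe_neg, star_neg, star_one, Matrix.mul_neg, Matrix.mul_one,
      neg_apply, submatrix_apply] at h
    linear_combination -h / 2

end Block

section Integral

variable {G X m n 𝕜 : Type*} [Fintype m] [RCLike 𝕜]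

theorem conj_integral_conj_eq_self [DecidableEq m] [Group G] [MeasurableSpace G]
    [MeasurableMul G] {μ : Measure G} [μ.IsMulLeftInvariant] (π : G →* Matrix m m 𝕜)
    (ρ : Matrix m m 𝕜) (hint : Integrable (fun V => π V * ρ * star (π V)) μ) (g : G) :
    π g * (∫ V, π V * ρ * star (π V) ∂μ) * star (π g) = ∫ V, π V * ρ * star (π V) ∂μ := by
  let conj : Matrix m m 𝕜 →L[𝕜] Matrix m m 𝕜 := LinearMap.toContinuousLinearMap
    (LinearMap.mulLeft 𝕜 (π g) ∘ₗ LinearMap.mulRight 𝕜 (star (π g)))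
  calc π g * (∫ V, π V * ρ * star (π V) ∂μ) * star (π g)
      = conj (∫ V, π V * ρ * star (π V) ∂μ) := by simp [conj, mul_assoc]
    _ = ∫ V, conj (π V * ρ * star (π V)) ∂μ := (conj.integral_comp_comm hint).symm
    _ = ∫ V, π (g * V) * ρ * star (π (g * V)) ∂μ := by
        simp [conj, map_mul, star_mul, mul_assoc]
    _ = ∫ V, π V * ρ * star (π V) ∂μ :=
        integral_mul_left_eq_self (fun V => π V * ρ * star (π V)) g

theorem trace_submatrix_integral [Fintype n] [MeasurableSpace X] {μ : Measure X}
    {f : X → Matrix m m 𝕜} (hf : Integrable f μ) (r : n → m) :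
    ((∫ x, f x ∂μ).submatrix r r).trace = ∫ x, ((f x).submatrix r r).trace ∂μ := by
  let subTrace : Matrix m m 𝕜 →L[𝕜] 𝕜 := LinearMap.toContinuousLinearMap
    { toFun := fun M => (M.submatrix r r).trace
      map_add' := fun M N => by simp [trace, Finset.sum_add_distrib]
      map_smul' := fun c M => by simp [trace, Finset.mul_sum] }
  exact (subTrace.integral_comp_comm hf).symm

end Integral

end Matrix

theorem block_twirl_eq_blockwise_mixed_general (p : ℕ)
    (n : Fin p → ℕ)
    (μ : Measure (∀ k, Matrix.unitaryGroup (Fin (n k)) ℂ))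
    [μ.IsHaarMeasure] [IsProbabilityMeasure μ]
    (ρ : Matrix (Σ k, Fin (n k)) (Σ k, Fin (n k)) ℂ) :
    (∫ V : ∀ k, Matrix.unitaryGroup (Fin (n k)) ℂ,
        Matrix.blockDiagonal' (fun k => (V k : Matrix (Fin (n k)) (Fin (n k)) ℂ)) * ρ *
          star (Matrix.blockDiagonal' (fun k => (V k : Matrix (Fin (n k)) (Fin (n k)) ℂ))) ∂μ)
      = Matrix.blockDiagonal'
          (fun k => ((diagBlock ρ k).trace / (n k : ℂ)) •
            (1 : Matrix (Fin (n k)) (Fin (n k)) ℂ)) := by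
  let π : (∀ k, unitaryGroup (Fin (n k)) ℂ) →* Matrix (Σ k, Fin (n k)) (Σ k, Fin (n k)) ℂ :=
    (blockDiagonal'RingHom (fun k => Fin (n k)) ℂ).toMonoidHom.comp
      (MonoidHom.piMap fun k => (unitaryGroup (Fin (n k)) ℂ).subtype)
  have hπ : Continuous π :=
    Continuous.matrix_blockDiagonal' (continuous_pi fun k => (continuous_apply k).subtype_val)
  have hint : Integrable (fun V => π V * ρ * star (π V)) μ :=
    ((hπ.matrix_mul continuous_const).matrix_mul hπ.star).integrable_of_hasCompactSupport
      (HasCompactSupport.of_compactSpace _)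
  refine (eq_blockDiagonal'_of_forall_unitary_conj_eq (conj_integral_conj_eq_self π ρ hint)).trans
    (congrArg blockDiagonal' (funext fun k => ?_))
  have htrace (V : ∀ k, unitaryGroup (Fin (n k)) ℂ) :
      ((π V * ρ * star (π V)).submatrix (Sigma.mk k) (Sigma.mk k)).trace = (diagBlock ρ k).trace :=
    trace_blockDiag'_unitary_conj V ρ k
  have hblockTrace :
      (blockDiag' (∫ V, π V * ρ * star (π V) ∂μ) k).trace = (diagBlock ρ k).trace :=
    (trace_submatrix_integral hint (Sigma.mk k)).trans (by simp [htrace])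
  rw [hblockTrace, Fintype.card_fin]

/-- **Eq. (13)/(50).** The Haar average of `ρ` over the thermodynamic group
`𝒢_T = ∏ₖ U(n k)`, acting block-diagonally, equals the block-wise maximally mixed matrix
`ρ_dd` with the same block traces. -/
theorem block_twirl_eq_blockwise_mixed (p : ℕ) (hp : 1 ≤ p)
    (n : Fin p → ℕ) (hn : ∀ k, 1 ≤ n k)
    (μ : Measure (∀ k, Matrix.unitaryGroup (Fin (n k)) ℂ))
    [μ.IsHaarMeasure] [IsProbabilityMeasure μ]
    (ρ : Matrix (Σ k, Fin (n k)) (Σ k, Fin (n k)) ℂ) :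
    (∫ V : ∀ k, Matrix.unitaryGroup (Fin (n k)) ℂ,
        Matrix.blockDiagonal' (fun k => (V k : Matrix (Fin (n k)) (Fin (n k)) ℂ)) * ρ *
          star (Matrix.blockDiagonal' (fun k => (V k : Matrix (Fin (n k)) (Fin (n k)) ℂ))) ∂μ)
      = Matrix.blockDiagonal'
          (fun k => ((diagBlock ρ k).trace / (n k : ℂ)) •
            (1 : Matrix (Fin (n k)) (Fin (n k)) ℂ)) :=
  block_twirl_eq_blockwise_mixed_general p n μ ρ
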